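/- For any bounded function b : ℕ² → ℂ, if for every integer d ≥ 1 the limit lim_{N→∞} 𝔼_{1≤m,n≤N} b(dm, dn) exists and equals a common value c (independent of d), then lim_{N→∞} (1/N²) ∑_{1≤m,n≤N, gcd(m,n)=1} b(m,n) = (6/π²) · c, and hence lim_{N→∞} 𝔼_{1≤m,n≤N, gcd(m,n)=1} b(m,n) = c. -/

import Mathlib

open Filter Finset Real ArithmeticFunction
open scoped ArithmeticFunction.Moebius LSeries.notation Topology

/-!
Möbius inversion writes the coprime sum as `∑_{d ≤ N} μ d · S_d (N / d)`, where `S_d M` is the sum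
of `b (d m, d n)` over `1 ≤ m, n ≤ M`. After division by `N²` the `d`-th term tends to
`μ d · c / d²` and is bounded by `B / d²`, so dominated convergence for series (Tannery's theorem)
gives the limit `c · ∑ μ d / d² = c / ζ 2 = 6 c / π²`. Taking `b = 1` shows that coprime pairs have
density `6 / π²`, and dividing the two limits gives the second claim.
-/

def boxSum {M : Type*} [AddCommMonoid M] (f : ℕ × ℕ → M) (N : ℕ) : M :=
  ∑ m ∈ Icc 1 N, ∑ n ∈ Icc 1 N, f (m, n)

lemma Nat.Icc_filter_dvd_eq_image {d : ℕ} (hd : 0 < d) (N : ℕ) :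
    (Icc 1 N).filter (d ∣ ·) = (Icc 1 (N / d)).image (d * ·) := by
  ext x
  simp only [mem_filter, mem_Icc, mem_image, Nat.le_div_iff_mul_le hd]
  constructor
  · rintro ⟨⟨hx1, hxN⟩, k, rfl⟩
    exact ⟨k, ⟨Nat.pos_of_mul_pos_left hx1, by linarith [mul_comm d k]⟩, rfl⟩
  · rintro ⟨k, ⟨hk1, hkN⟩, rfl⟩
    exact ⟨⟨Nat.mul_pos hd hk1, by linarith [mul_comm d k]⟩, dvd_mul_right d k⟩

lemma sum_filter_dvd_dvd_eq_boxSum {M : Type*} [AddCommMonoid M] (f : ℕ × ℕ → M) {d : ℕ}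
    (hd : 0 < d) (N : ℕ) :
    ∑ p ∈ (Icc 1 N ×ˢ Icc 1 N).filter (fun p => d ∣ p.1 ∧ d ∣ p.2), f p
      = boxSum (fun p => f (d * p.1, d * p.2)) (N / d) := by
  have hinj : ∀ s : Finset ℕ, Set.InjOn (d * ·) s := fun _ => (mul_right_injective₀ hd.ne').injOn
  rw [filter_product, Nat.Icc_filter_dvd_eq_image hd, sum_product, sum_image (hinj _), boxSum]
  exact sum_congr rfl fun m _ => sum_image (hinj _)

lemma Nat.Icc_filter_dvd_eq_divisors {g N : ℕ} (hg : 0 < g) (hgN : g ≤ N) :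
    (Icc 1 N).filter (· ∣ g) = g.divisors := by
  ext d
  simp only [mem_filter, mem_Icc, Nat.mem_divisors]
  exact ⟨fun h => ⟨h.2, hg.ne'⟩, fun h => ⟨⟨Nat.pos_of_dvd_of_pos h.1 hg,
    (Nat.le_of_dvd hg h.1).trans hgN⟩, h.1⟩⟩

lemma sum_divisors_moebius {R : Type*} [Ring R] (n : ℕ) :
    ∑ d ∈ n.divisors, (μ d : R) = if n = 1 then 1 else 0 := by
  have := congrArg (· n) (coe_moebius_mul_coe_zeta (R := R))
  simpa only [coe_mul_zeta_apply, one_apply, intCoe_apply] using this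

theorem sum_coprime_eq_sum_moebius_mul_boxSum {R : Type*} [Ring R] (f : ℕ × ℕ → R) (N : ℕ) :
    ∑ p ∈ (Icc 1 N ×ˢ Icc 1 N).filter (fun p => Nat.gcd p.1 p.2 = 1), f p
      = ∑ d ∈ Icc 1 N, (μ d : R) * boxSum (fun p => f (d * p.1, d * p.2)) (N / d) := by
  have hgcd : ∀ p ∈ Icc 1 N ×ˢ Icc 1 N, (if Nat.gcd p.1 p.2 = 1 then f p else 0)
      = ∑ d ∈ Icc 1 N, if d ∣ p.1 ∧ d ∣ p.2 then (μ d : R) * f p else 0 := by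
    intro p hp
    simp only [mem_product, mem_Icc] at hp
    have hg : 0 < Nat.gcd p.1 p.2 := Nat.gcd_pos_of_pos_left _ hp.1.1
    simp_rw [← Nat.dvd_gcd_iff, ← sum_filter, ← sum_mul,
      Nat.Icc_filter_dvd_eq_divisors hg ((Nat.gcd_le_left _ hp.1.1).trans hp.1.2),
      sum_divisors_moebius, ite_mul, one_mul, zero_mul]
  rw [sum_filter, sum_congr rfl hgcd, sum_comm]
  refine sum_congr rfl fun d hd => ?_
  rw [← sum_filter, ← mul_sum, sum_filter_dvd_dvd_eq_boxSum f (mem_Icc.1 hd).1]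

lemma norm_boxSum_le {E : Type*} [SeminormedAddCommGroup E] {f : ℕ × ℕ → E} {B : ℝ}
    (hf : ∀ p, ‖f p‖ ≤ B) (N : ℕ) : ‖boxSum f N‖ ≤ N ^ 2 * B := by
  rw [boxSum, ← sum_product']
  simpa [sq] using norm_sum_le_of_le (Icc 1 N ×ˢ Icc 1 N) fun p _ => hf p

lemma tendsto_natCast_div_div_self (d : ℕ) :
    Tendsto (fun N : ℕ => ((N / d : ℕ) : ℝ) / N) atTop (𝓝 (1 / d)) := by
  refine ((tendsto_nat_floor_mul_div_atTop (one_div_nonneg.2 d.cast_nonneg)).comp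
    tendsto_natCast_atTop_atTop).congr fun N => ?_
  rw [Function.comp_apply, one_div_mul_eq_div, Nat.floor_div_eq_div]

lemma tendsto_comp_div_div_sq {f : ℕ → ℂ} {c : ℂ}
    (hf : Tendsto (fun N : ℕ => f N / (N : ℂ) ^ 2) atTop (𝓝 c)) {d : ℕ} (hd : 0 < d) :
    Tendsto (fun N : ℕ => f (N / d) / (N : ℂ) ^ 2) atTop (𝓝 (c / d ^ 2)) := by
  have hratio : Tendsto (fun N : ℕ => ((N / d : ℕ) : ℂ) / N) atTop (𝓝 (1 / d)) := by
    have := (Complex.continuous_ofReal.tendsto _).comp (tendsto_natCast_div_div_self d)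
    simpa [Function.comp_def] using this
  have hlim := (hf.comp (Nat.tendsto_div_const_atTop hd.ne')).mul (hratio.pow 2)
  rw [one_div, inv_pow, ← div_eq_mul_inv] at hlim
  refine hlim.congr' ?_
  filter_upwards [eventually_ge_atTop d] with N hN
  have hNd : ((N / d : ℕ) : ℂ) ≠ 0 := Nat.cast_ne_zero.2 (Nat.div_pos hN hd).ne'
  have hN : (N : ℂ) ≠ 0 := Nat.cast_ne_zero.2 (hd.trans_le hN).ne'
  simp only [Function.comp_apply]
  field_simp

theorem LSeries_moebius_two : L ↗μ 2 = 6 / (π : ℂ) ^ 2 := by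
  have hz := LSeries_zeta_mul_Lseries_moebius (s := 2) (by norm_num)
  rw [LSeries_zeta_eq_riemannZeta (by norm_num), riemannZeta_two] at hz
  have hpi : (π : ℂ) ≠ 0 := Complex.ofReal_ne_zero.2 pi_ne_zero
  field_simp at hz ⊢
  linear_combination hz

lemma norm_moebius_mul_boxSum_div_sq_le {f : ℕ × ℕ → ℂ} {B : ℝ} (hf : ∀ p, ‖f p‖ ≤ B)
    (d N : ℕ) :
    ‖(μ d : ℂ) * boxSum (fun p => f (d * p.1, d * p.2)) (N / d) / (N : ℂ) ^ 2‖ ≤ B / d ^ 2 := by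
  have hB : 0 ≤ B := (norm_nonneg _).trans (hf 0)
  rcases Nat.eq_zero_or_pos N with rfl | hN
  · simp only [CharP.cast_eq_zero, ne_eq, OfNat.ofNat_ne_zero, not_false_eq_true, zero_pow,
      div_zero, norm_zero]
    positivity
  have hμ : ‖(μ d : ℂ)‖ ≤ 1 := by exact_mod_cast abs_moebius_le_one
  have hbox : ‖boxSum (fun p => f (d * p.1, d * p.2)) (N / d)‖ ≤ ((N : ℝ) / d) ^ 2 * B :=
    (norm_boxSum_le (fun p => hf _) _).trans (by gcongr; exact Nat.cast_div_le)
  rw [norm_div, norm_mul, norm_pow, Complex.norm_natCast]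
  calc ‖(μ d : ℂ)‖ * ‖boxSum (fun p => f (d * p.1, d * p.2)) (N / d)‖ / (N : ℝ) ^ 2
      ≤ 1 * (((N : ℝ) / d) ^ 2 * B) / (N : ℝ) ^ 2 := by gcongr
    _ = B / d ^ 2 := by field_simp

lemma tsum_moebius_mul_boxSum_div_sq (f : ℕ × ℕ → ℂ) (N : ℕ) :
    ∑' d, (μ d : ℂ) * boxSum (fun p => f (d * p.1, d * p.2)) (N / d) / (N : ℂ) ^ 2
      = (∑ p ∈ (Icc 1 N ×ˢ Icc 1 N).filter (fun p => Nat.gcd p.1 p.2 = 1), f p) / (N : ℂ) ^ 2 := by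
  -- `N / d = 0` off `Icc 1 N`, also at `d = 0` since `N / 0 = 0`.
  have hvanish : ∀ d ∉ Icc 1 N,
      (μ d : ℂ) * boxSum (fun p => f (d * p.1, d * p.2)) (N / d) / (N : ℂ) ^ 2 = 0 := by
    intro d hd
    have : N / d = 0 := by
      rcases Nat.eq_zero_or_pos d with rfl | hd0
      · exact Nat.div_zero N
      · simp only [mem_Icc, not_and, not_le] at hd
        exact Nat.div_eq_of_lt (hd hd0)
    simp [this, boxSum]
  rw [tsum_eq_sum hvanish, ← sum_div, sum_coprime_eq_sum_moebius_mul_boxSum]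

theorem tendsto_sum_coprime_div_sq {b : ℕ × ℕ → ℂ} {B : ℝ} (hb : ∀ p, ‖b p‖ ≤ B) {c : ℂ}
    (h : ∀ d : ℕ, 1 ≤ d →
      Tendsto (fun N : ℕ => boxSum (fun p => b (d * p.1, d * p.2)) N / (N : ℂ) ^ 2)
        atTop (𝓝 c)) :
    Tendsto (fun N : ℕ =>
        (∑ p ∈ (Icc 1 N ×ˢ Icc 1 N).filter (fun p => Nat.gcd p.1 p.2 = 1), b p) / (N : ℂ) ^ 2)
      atTop (𝓝 (6 / (π : ℂ) ^ 2 * c)) := by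
  have hterm : ∀ d : ℕ, Tendsto
      (fun N : ℕ => (μ d : ℂ) * boxSum (fun p => b (d * p.1, d * p.2)) (N / d) / (N : ℂ) ^ 2)
      atTop (𝓝 (LSeries.term ↗μ 2 d * c)) := by
    intro d
    rcases Nat.eq_zero_or_pos d with rfl | hd
    · simp
    convert (tendsto_comp_div_div_sq (h d hd) hd).const_mul (μ d : ℂ) using 1
    · exact funext fun N => mul_div_assoc ..
    · rw [LSeries.term_of_ne_zero hd.ne', Complex.cpow_ofNat]
      exact congrArg 𝓝 (by ring)
  have hsum : Summable fun d : ℕ => B / (d : ℝ) ^ 2 := by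
    simpa only [mul_one_div] using (summable_one_div_nat_pow.2 one_lt_two).mul_left B
  have hlim := tendsto_tsum_of_dominated_convergence hsum hterm
    (Eventually.of_forall fun N d => norm_moebius_mul_boxSum_div_sq_le hb d N)
  rw [tsum_mul_right, ← LSeries, LSeries_moebius_two] at hlim
  simpa only [tsum_moebius_mul_boxSum_div_sq] using hlim

lemma tendsto_card_coprime_div_sq :
    Tendsto (fun N : ℕ =>
        (#((Icc 1 N ×ˢ Icc 1 N).filter (fun p => Nat.gcd p.1 p.2 = 1)) : ℂ) / (N : ℂ) ^ 2)
      atTop (𝓝 (6 / (π : ℂ) ^ 2)) := by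
  have hbox : Tendsto (fun N : ℕ => boxSum (fun _ => (1 : ℂ)) N / (N : ℂ) ^ 2) atTop (𝓝 1) := by
    refine tendsto_const_nhds.congr' ?_
    filter_upwards [eventually_ne_atTop 0] with N hN
    have : (N : ℂ) ≠ 0 := Nat.cast_ne_zero.2 hN
    field_simp
    simp [boxSum, sq]
  simpa using tendsto_sum_coprime_div_sq (b := fun _ => 1) (B := 1) (by simp) fun _ _ => hbox

theorem stmt7 (b : ℕ × ℕ → ℂ) (B : ℝ) (hb : ∀ p, ‖b p‖ ≤ B) (c : ℂ)
    (h : ∀ d : ℕ, 1 ≤ d →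
      Tendsto (fun N : ℕ =>
          (∑ m ∈ Finset.Icc 1 N, ∑ n ∈ Finset.Icc 1 N, b (d * m, d * n)) / (N : ℂ) ^ 2)
        atTop (nhds c)) :
    Tendsto (fun N : ℕ =>
        (∑ p ∈ (Finset.Icc 1 N ×ˢ Finset.Icc 1 N).filter (fun p => Nat.gcd p.1 p.2 = 1),
            b p) / (N : ℂ) ^ 2)
      atTop (nhds ((6 / (Real.pi : ℂ) ^ 2) * c)) ∧
    Tendsto (fun N : ℕ =>
        (∑ p ∈ (Finset.Icc 1 N ×ˢ Finset.Icc 1 N).filter (fun p => Nat.gcd p.1 p.2 = 1),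
            b p) /
          (((Finset.Icc 1 N ×ˢ Finset.Icc 1 N).filter
              (fun p => Nat.gcd p.1 p.2 = 1)).card : ℂ))
      atTop (nhds c) := by
  have hsum := tendsto_sum_coprime_div_sq hb h
  have hdensity : (6 / (π : ℂ) ^ 2) ≠ 0 := by
    exact div_ne_zero (by norm_num) (pow_ne_zero 2 (Complex.ofReal_ne_zero.2 pi_ne_zero))
  refine ⟨hsum, ?_⟩
  have hratio := hsum.div tendsto_card_coprime_div_sq hdensity
  rw [mul_div_cancel_left₀ c hdensity] at hratio
  refine hratio.congr' ?_
  filter_upwards [eventually_ne_atTop 0] with N hN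
  have : (N : ℂ) ≠ 0 := Nat.cast_ne_zero.2 hN
  exact div_div_div_cancel_right₀ (pow_ne_zero 2 this) _ _
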